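/- arXiv:2103.07376 — 4 statements merged into one kernel-verified Lean document; each statement's English description precedes it below -/
import Mathlib

section
/- Let H be a separable real Hilbert space, μ a positive Radon measure on I = [0,T], and u : I → H a BVRC mapping whose differential measure du has a density du/dμ ∈ L¹(I, H; μ) with respect to μ. Then the real function φ : t ↦ ‖u(t)‖² is BVRC and its differential measure dφ satisfies the inequality of measures dφ ≤ 2⟨u, du/dμ⟩ dμ, i.e. dφ(B) ≤ 2∫_B ⟨u(t), (du/dμ)(t)⟩ dμ(t) for every Borel set B ⊂ I. -/
open MeasureTheory Set RealInnerProductSpace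

lemma key_fubini {H : Type*} [NormedAddCommGroup H] [InnerProductSpace ℝ H]
    [CompleteSpace H]
    (ρ : Measure ℝ) [IsFiniteMeasure ρ] {w : ℝ → H}
    (hw : StronglyMeasurable w) (hwi : Integrable w ρ) :
    Integrable (fun x => 2 * ⟪∫ y in Iic x, w y ∂ρ, w x⟫ - (ρ {x}).toReal * ‖w x‖ ^ 2) ρ ∧
    ∫ x, (2 * ⟪∫ y in Iic x, w y ∂ρ, w x⟫ - (ρ {x}).toReal * ‖w x‖ ^ 2) ∂ρ
      = ‖∫ y, w y ∂ρ‖ ^ 2 := by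
  set F : ℝ × ℝ → ℝ := fun p => ⟪w p.2, w p.1⟫ with hFdef
  have hFm : StronglyMeasurable F :=
    (hw.comp_measurable measurable_snd).inner (hw.comp_measurable measurable_fst)
  have hFi : Integrable F (ρ.prod ρ) := by
    refine (hwi.norm.mul_prod hwi.norm).mono' hFm.aestronglyMeasurable ?_
    filter_upwards with p
    calc ‖F p‖ = |⟪w p.2, w p.1⟫| := by rw [Real.norm_eq_abs]
    _ ≤ ‖w p.2‖ * ‖w p.1‖ := abs_real_inner_le_norm _ _
    _ = ‖w p.1‖ * ‖w p.2‖ := mul_comm _ _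
  have hD : MeasurableSet {p : ℝ × ℝ | p.2 ≤ p.1} := measurableSet_le measurable_snd measurable_fst
  have hDlt : MeasurableSet {p : ℝ × ℝ | p.2 < p.1} :=
    measurableSet_lt measurable_snd measurable_fst
  have hDeq : MeasurableSet {p : ℝ × ℝ | p.2 = p.1} :=
    measurableSet_eq_fun measurable_snd measurable_fst
  -- inner integral over the diagonal
  have hdiag : ∀ x : ℝ, (∫ y, ({p : ℝ × ℝ | p.2 = p.1}.indicator F) (x, y) ∂ρ)
      = (ρ {x}).toReal * ‖w x‖ ^ 2 := by
    intro x
    have h1 : (fun y => ({p : ℝ × ℝ | p.2 = p.1}.indicator F) (x, y))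
        = ({x} : Set ℝ).indicator (fun y => ⟪w y, w x⟫) := by
      funext y
      by_cases h : y = x
      · rw [h, Set.indicator_of_mem (show (Prod.mk x x) ∈ {p : ℝ × ℝ | p.2 = p.1} by simp),
          Set.indicator_of_mem (show x ∈ ({x} : Set ℝ) by simp)]
      · rw [Set.indicator_of_notMem (by simpa using h), Set.indicator_of_notMem (by simpa using h)]
    rw [h1, integral_indicator (measurableSet_singleton x), Measure.restrict_singleton,
      integral_smul_measure, integral_dirac, real_inner_self_eq_norm_sq, smul_eq_mul]
  -- inner integral over {y ≤ x}
  have hle : ∀ x : ℝ, (∫ y, ({p : ℝ × ℝ | p.2 ≤ p.1}.indicator F) (x, y) ∂ρ)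
      = ⟪∫ y in Iic x, w y ∂ρ, w x⟫ := by
    intro x
    have h1 : (fun y => ({p : ℝ × ℝ | p.2 ≤ p.1}.indicator F) (x, y))
        = (Iic x).indicator (fun y => ⟪w y, w x⟫) := by
      funext y
      by_cases h : y ≤ x
      · rw [Set.indicator_of_mem (by simpa using h), Set.indicator_of_mem (by simpa using h)]
      · rw [Set.indicator_of_notMem (by simpa using h),
          Set.indicator_of_notMem (by simpa using h)]
    rw [h1, integral_indicator measurableSet_Iic,
      integral_congr_ae (Filter.Eventually.of_forall fun y => real_inner_comm (w x) (w y)),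
      integral_inner hwi.restrict, real_inner_comm]
  set v := ∫ y, w y ∂ρ with hvdef
  -- total integral
  have htot : ∫ p, F p ∂(ρ.prod ρ) = ‖v‖ ^ 2 := by
    have h2 := integral_integral (f := fun x y => ⟪w y, w x⟫) (μ := ρ) (ν := ρ) hFi
    have h3 : ∀ x : ℝ, ∫ y, ⟪w y, w x⟫ ∂ρ = ⟪v, w x⟫ := fun x => by
      rw [integral_congr_ae (Filter.Eventually.of_forall fun y => real_inner_comm (w x) (w y)),
        integral_inner hwi, real_inner_comm]
    calc ∫ p, F p ∂(ρ.prod ρ) = ∫ x, ∫ y, ⟪w y, w x⟫ ∂ρ ∂ρ := h2.symm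
    _ = ∫ x, ⟪v, w x⟫ ∂ρ := integral_congr_ae (Filter.Eventually.of_forall h3)
    _ = ⟪v, v⟫ := integral_inner hwi v
    _ = ‖v‖ ^ 2 := real_inner_self_eq_norm_sq v
  -- swap
  have hswap : ∫ p in {p : ℝ × ℝ | p.2 ≤ p.1}ᶜ, F p ∂(ρ.prod ρ)
      = ∫ p in {p : ℝ × ℝ | p.2 < p.1}, F p ∂(ρ.prod ρ) := by
    rw [← integral_indicator hD.compl, ← integral_indicator hDlt,
      ← integral_prod_swap (fun z => ({p : ℝ × ℝ | p.2 ≤ p.1}ᶜ.indicator F) z)]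
    congr 1
    funext z
    by_cases h : z.2 < z.1
    · rw [Set.indicator_of_mem (by simpa [not_le] using h),
        Set.indicator_of_mem (by simpa using h)]
      exact real_inner_comm _ _
    · rw [Set.indicator_of_notMem (by simpa [not_le] using h),
        Set.indicator_of_notMem (by simpa using h)]
  -- first split
  have hsplit1 : ∫ p in {p : ℝ × ℝ | p.2 ≤ p.1}, F p ∂(ρ.prod ρ)
      + ∫ p in {p : ℝ × ℝ | p.2 ≤ p.1}ᶜ, F p ∂(ρ.prod ρ) = ∫ p, F p ∂(ρ.prod ρ) :=
    integral_add_compl hD hFi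
  -- second split
  have hsplit2 : ∫ p in {p : ℝ × ℝ | p.2 ≤ p.1}, F p ∂(ρ.prod ρ)
      = ∫ p in {p : ℝ × ℝ | p.2 < p.1}, F p ∂(ρ.prod ρ)
        + ∫ p in {p : ℝ × ℝ | p.2 = p.1}, F p ∂(ρ.prod ρ) := by
    have hU : {p : ℝ × ℝ | p.2 ≤ p.1} = {p : ℝ × ℝ | p.2 < p.1} ∪ {p : ℝ × ℝ | p.2 = p.1} := by
      ext p; simp [le_iff_lt_or_eq]
    have hdisj : Disjoint {p : ℝ × ℝ | p.2 < p.1} {p : ℝ × ℝ | p.2 = p.1} := by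
      rw [Set.disjoint_left]
      intro p h1 h2
      exact absurd h2 (ne_of_lt h1)
    rw [hU, setIntegral_union hdisj hDeq hFi.integrableOn hFi.integrableOn]
  -- representations as single integrals
  have hle' : ∫ p in {p : ℝ × ℝ | p.2 ≤ p.1}, F p ∂(ρ.prod ρ)
      = ∫ x, ⟪∫ y in Iic x, w y ∂ρ, w x⟫ ∂ρ := by
    rw [← integral_indicator hD]
    have h2 := integral_integral (f := fun x y => ({p : ℝ × ℝ | p.2 ≤ p.1}.indicator F) (x, y))
      (μ := ρ) (ν := ρ) (hFi.indicator hD)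
    calc ∫ p, ({p : ℝ × ℝ | p.2 ≤ p.1}.indicator F) p ∂(ρ.prod ρ)
        = ∫ x, ∫ y, ({p : ℝ × ℝ | p.2 ≤ p.1}.indicator F) (x, y) ∂ρ ∂ρ := h2.symm
    _ = ∫ x, ⟪∫ y in Iic x, w y ∂ρ, w x⟫ ∂ρ :=
        integral_congr_ae (Filter.Eventually.of_forall hle)
  have heq' : ∫ p in {p : ℝ × ℝ | p.2 = p.1}, F p ∂(ρ.prod ρ)
      = ∫ x, (ρ {x}).toReal * ‖w x‖ ^ 2 ∂ρ := by
    rw [← integral_indicator hDeq]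
    have h2 := integral_integral (f := fun x y => ({p : ℝ × ℝ | p.2 = p.1}.indicator F) (x, y))
      (μ := ρ) (ν := ρ) (hFi.indicator hDeq)
    calc ∫ p, ({p : ℝ × ℝ | p.2 = p.1}.indicator F) p ∂(ρ.prod ρ)
        = ∫ x, ∫ y, ({p : ℝ × ℝ | p.2 = p.1}.indicator F) (x, y) ∂ρ ∂ρ := h2.symm
    _ = ∫ x, (ρ {x}).toReal * ‖w x‖ ^ 2 ∂ρ :=
        integral_congr_ae (Filter.Eventually.of_forall hdiag)
  -- integrabilities
  have hileI : Integrable (fun x => ⟪∫ y in Iic x, w y ∂ρ, w x⟫) ρ :=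
    ((hFi.indicator hD).integral_prod_left).congr (Filter.Eventually.of_forall hle)
  have hieqI : Integrable (fun x => (ρ {x}).toReal * ‖w x‖ ^ 2) ρ :=
    ((hFi.indicator hDeq).integral_prod_left).congr (Filter.Eventually.of_forall hdiag)
  refine ⟨(hileI.const_mul 2).sub hieqI, ?_⟩
  rw [integral_sub (hileI.const_mul 2) hieqI, integral_const_mul]
  rw [← hle', ← heq']
  linarith [htot, hswap, hsplit1, hsplit2]

/-- Let `H` be a separable real Hilbert space, `μ` a positive Radon
measure on `I = [0,T]`, and `u : I → H` a BVRC mapping whose differential measure `du`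
has a density `du/dμ = w ∈ L¹(I,H;μ)` with respect to `μ` (i.e. `u(t) - u(s) = ∫_{]s,t]} w dμ`).
Then `φ : t ↦ ‖u(t)‖²` is BVRC and its differential measure `dφ` (the signed measure with
`dφ(]s,t]) = φ(t) - φ(s)`) satisfies `dφ(B) ≤ 2 ∫_B ⟪u, w⟫ dμ` for every Borel `B ⊆ I`. -/
theorem differential_measure_norm_sq
    {H : Type*} [NormedAddCommGroup H] [InnerProductSpace ℝ H]
    [CompleteSpace H] [TopologicalSpace.SeparableSpace H]
    (T : ℝ) (hT : 0 < T) (μ : Measure ℝ) [IsFiniteMeasure μ]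
    (u w : ℝ → H)
    (hu_bv : BoundedVariationOn u (Icc 0 T))
    (hu_rc : ∀ t ∈ Ico 0 T, ContinuousWithinAt u (Ici t) t)
    (hw_int : IntegrableOn w (Icc 0 T) μ)
    (hdens : ∀ s ∈ Icc 0 T, ∀ t ∈ Icc 0 T, s ≤ t →
      u t - u s = ∫ x in Ioc s t, w x ∂μ) :
    BoundedVariationOn (fun t => ‖u t‖ ^ 2) (Icc 0 T) ∧
    (∀ t ∈ Ico 0 T, ContinuousWithinAt (fun t => ‖u t‖ ^ 2) (Ici t) t) ∧
    ∃ dφ : SignedMeasure ℝ,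
      (∀ s ∈ Icc 0 T, ∀ t ∈ Icc 0 T, s ≤ t →
        dφ (Ioc s t) = ‖u t‖ ^ 2 - ‖u s‖ ^ 2) ∧
      ∀ B ⊆ Icc 0 T, MeasurableSet B →
        dφ B ≤ 2 * ∫ x in B, ⟪u x, w x⟫ ∂μ := by
  classical
  set ν : Measure ℝ := μ.restrict (Icc 0 T) with hνdef
  obtain ⟨w', hw'sm, hww'⟩ : ∃ w' : ℝ → H, StronglyMeasurable w' ∧ w =ᵐ[ν] w' :=
    ⟨hw_int.1.mk w, hw_int.1.stronglyMeasurable_mk, hw_int.1.ae_eq_mk⟩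
  have hw'i : Integrable w' ν := hw_int.congr hww'
  have hws : ∀ s : Set ℝ, s ⊆ Icc 0 T → w =ᵐ[μ.restrict s] w' := fun s hs =>
    hww'.filter_mono (ae_mono (Measure.restrict_mono hs le_rfl))
  have hdens' : ∀ s ∈ Icc 0 T, ∀ t ∈ Icc 0 T, s ≤ t →
      u t - u s = ∫ x in Ioc s t, w' x ∂μ := by
    intro s hs t ht hst
    rw [hdens s hs t ht hst]
    exact integral_congr_ae (hws _ (subset_trans Ioc_subset_Icc_self (Icc_subset_Icc hs.1 ht.2)))
  set M : ℝ := ∫ x, ‖w' x‖ ∂ν with hMdef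
  have hM0 : 0 ≤ M := integral_nonneg fun x => norm_nonneg _
  set C : ℝ := ‖u 0‖ + M with hCdef
  have h0T : (0:ℝ) ∈ Icc 0 T := ⟨le_refl 0, le_of_lt hT⟩
  have hu_eq : ∀ x ∈ Icc 0 T, u x = u 0 + ∫ y in Ioc 0 x, w' y ∂μ := by
    intro x hx
    have h := hdens' 0 h0T x hx hx.1
    rw [sub_eq_iff_eq_add'] at h
    exact h
  set U : ℝ → H := fun x => u 0 + ∫ y in Ioc 0 x, w' y ∂μ with hUdef
  have hUu : ∀ x ∈ Icc 0 T, U x = u x := fun x hx => (hu_eq x hx).symm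
  have hUsm : StronglyMeasurable U := by
    have hS : MeasurableSet {p : ℝ × ℝ | 0 < p.2 ∧ p.2 ≤ p.1} :=
      (measurableSet_lt measurable_const measurable_snd).inter
        (measurableSet_le measurable_snd measurable_fst)
    have h1 : StronglyMeasurable
        ({p : ℝ × ℝ | 0 < p.2 ∧ p.2 ≤ p.1}.indicator (fun q : ℝ × ℝ => w' q.2)) :=
      (hw'sm.comp_measurable measurable_snd).indicator hS
    have h2 := h1.integral_prod_right' (ν := μ)
    have h3 : (fun x => ∫ y, ({p : ℝ × ℝ | 0 < p.2 ∧ p.2 ≤ p.1}.indicator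
        (fun q : ℝ × ℝ => w' q.2)) (x, y) ∂μ) = fun x => ∫ y in Ioc 0 x, w' y ∂μ := by
      funext x
      rw [← integral_indicator measurableSet_Ioc]
      refine integral_congr_ae (Filter.Eventually.of_forall fun y => ?_)
      simp only [Set.indicator_apply, Set.mem_setOf_eq, Set.mem_Ioc]
    rw [h3] at h2
    rw [hUdef]
    exact stronglyMeasurable_const.add h2
  have hnorm_u : ∀ x ∈ Icc 0 T, ‖u x‖ ≤ C := by
    intro x hx
    rw [hu_eq x hx]
    refine (norm_add_le _ _).trans ?_
    have h1 : ‖∫ y in Ioc 0 x, w' y ∂μ‖ ≤ ∫ y in Ioc 0 x, ‖w' y‖ ∂μ :=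
      norm_integral_le_integral_norm _
    have h2 : ∫ y in Ioc 0 x, ‖w' y‖ ∂μ ≤ M := by
      rw [hMdef, hνdef]
      refine setIntegral_mono_set hw'i.norm
        (Filter.Eventually.of_forall fun y => norm_nonneg _) ?_
      exact HasSubset.Subset.eventuallyLE
        (subset_trans Ioc_subset_Icc_self (Icc_subset_Icc_right hx.2))
    rw [hCdef]
    linarith
  have hmν : Measurable (fun x : ℝ => (ν {x}).toReal) := by
    have hSdiag : MeasurableSet {p : ℝ × ℝ | p.2 = p.1} :=
      measurableSet_eq_fun measurable_snd measurable_fst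
    have h1 := measurable_measure_prodMk_left (ν := ν) hSdiag
    have h0 : ∀ x : ℝ, Prod.mk x ⁻¹' {p : ℝ × ℝ | p.2 = p.1} = {x} := by
      intro x; ext y; simp [eq_comm]
    have h2 : (fun x : ℝ => ν (Prod.mk x ⁻¹' {p : ℝ × ℝ | p.2 = p.1})) = fun x => ν {x} := by
      funext x; rw [h0 x]
    rw [h2] at h1
    exact h1.ennreal_toReal
  set g : ℝ → ℝ := fun x => 2 * ⟪U x, w' x⟫ - (ν {x}).toReal * ‖w' x‖ ^ 2 with hgdef
  have hterm1 : Integrable (fun x => ⟪U x, w' x⟫) ν := by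
    refine Integrable.mono' (hw'i.norm.const_mul C)
      (hUsm.inner hw'sm).aestronglyMeasurable ?_
    filter_upwards [ae_restrict_mem measurableSet_Icc] with x hx
    calc ‖⟪U x, w' x⟫‖ = |⟪U x, w' x⟫| := Real.norm_eq_abs _
    _ ≤ ‖U x‖ * ‖w' x‖ := abs_real_inner_le_norm _ _
    _ ≤ C * ‖w' x‖ := by
        rw [hUu x hx]
        exact mul_le_mul_of_nonneg_right (hnorm_u x hx) (norm_nonneg _)
  have hsing : ∀ x : ℝ, (ν {x}).toReal * ‖w' x‖ ≤ M := by
    intro x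
    have h1 : (ν {x}).toReal * ‖w' x‖ = ∫ y in {x}, ‖w' y‖ ∂ν := by
      rw [Measure.restrict_singleton, integral_smul_measure, integral_dirac, smul_eq_mul]
    have h2 : ∫ y in {x}, ‖w' y‖ ∂ν ≤ ∫ y, ‖w' y‖ ∂ν :=
      setIntegral_le_integral hw'i.norm (Filter.Eventually.of_forall fun y => norm_nonneg _)
    rw [h1, hMdef]
    exact h2
  have hnsq : StronglyMeasurable (fun x => ‖w' x‖ ^ 2) := by
    simp only [pow_two]
    exact hw'sm.norm.mul hw'sm.norm
  have hterm2 : Integrable (fun x => (ν {x}).toReal * ‖w' x‖ ^ 2) ν := by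
    refine Integrable.mono' (hw'i.norm.const_mul M)
      ((hmν.stronglyMeasurable.mul hnsq).aestronglyMeasurable) ?_
    filter_upwards with x
    have h0 : (0:ℝ) ≤ (ν {x}).toReal * ‖w' x‖ ^ 2 := by positivity
    rw [Real.norm_eq_abs, abs_of_nonneg h0]
    calc (ν {x}).toReal * ‖w' x‖ ^ 2 = ((ν {x}).toReal * ‖w' x‖) * ‖w' x‖ := by ring
    _ ≤ M * ‖w' x‖ := mul_le_mul_of_nonneg_right (hsing x) (norm_nonneg _)
  have hgI : Integrable g ν := (hterm1.const_mul 2).sub hterm2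
  refine ⟨?_, ?_, ν.withDensityᵥ g, ?_, ?_⟩
  · -- bounded variation
    have hC0 : (0:ℝ) ≤ 2 * C := by
      have : (0:ℝ) ≤ C := le_trans (norm_nonneg _) ((le_add_iff_nonneg_right _).2 hM0)
      linarith
    have hK : LipschitzOnWith (Real.toNNReal (2 * C)) (fun x : H => ‖x‖ ^ 2)
        (Metric.closedBall 0 C) := by
      rw [lipschitzOnWith_iff_dist_le_mul]
      intro x hx y hy
      rw [Metric.mem_closedBall, dist_zero_right] at hx hy
      rw [Real.dist_eq, dist_eq_norm, Real.coe_toNNReal _ hC0]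
      have h1 : |‖x‖ - ‖y‖| ≤ ‖x - y‖ := abs_norm_sub_norm_le x y
      have h2 : |‖x‖ ^ 2 - ‖y‖ ^ 2| = (‖x‖ + ‖y‖) * |‖x‖ - ‖y‖| := by
        rw [← abs_of_nonneg (by positivity : (0:ℝ) ≤ ‖x‖ + ‖y‖), ← abs_mul]
        congr 1; ring
      rw [h2]
      calc (‖x‖ + ‖y‖) * |‖x‖ - ‖y‖| ≤ (2 * C) * |‖x‖ - ‖y‖| := by
            refine mul_le_mul_of_nonneg_right (by linarith) (abs_nonneg _)
      _ ≤ (2 * C) * ‖x - y‖ := mul_le_mul_of_nonneg_left h1 hC0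
    have hmap : MapsTo u (Icc 0 T) (Metric.closedBall 0 C) := by
      intro x hx
      rw [Metric.mem_closedBall, dist_zero_right]
      exact hnorm_u x hx
    exact hK.comp_boundedVariationOn hmap hu_bv
  · -- right continuity
    intro t ht
    exact ((continuous_norm.pow 2).continuousAt).comp_continuousWithinAt (hu_rc t ht)
  · -- equality on Ioc
    intro s hs t ht hst
    have hA : MeasurableSet (Ioc s t) := measurableSet_Ioc
    have hAIcc : Ioc s t ⊆ Icc 0 T :=
      subset_trans Ioc_subset_Icc_self (Icc_subset_Icc hs.1 ht.2)
    rw [withDensityᵥ_apply hgI hA]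
    have hρ : ν.restrict (Ioc s t) = μ.restrict (Ioc s t) := by
      rw [hνdef, Measure.restrict_restrict hA, inter_eq_self_of_subset_left hAIcc]
    set ρ : Measure ℝ := μ.restrict (Ioc s t) with hρdef
    have hwρ : Integrable w' ρ := by
      rw [← hρ]; exact hw'i.integrableOn
    obtain ⟨hkeyI, hkey⟩ := key_fubini ρ hw'sm hwρ
    have hv : ∫ y, w' y ∂ρ = u t - u s := by
      rw [hρdef]
      exact (hdens' s hs t ht hst).symm
    have hgG : ∀ x ∈ Ioc s t, g x = ⟪u s, w' x⟫ * 2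
        + (2 * ⟪∫ y in Iic x, w' y ∂ρ, w' x⟫ - (ρ {x}).toReal * ‖w' x‖ ^ 2) := by
      intro x hx
      have hxI : x ∈ Icc 0 T := hAIcc hx
      have h1 : ρ.restrict (Iic x) = μ.restrict (Ioc s x) := by
        rw [hρdef, Measure.restrict_restrict measurableSet_Iic]
        congr 1
        ext y
        simp only [mem_inter_iff, mem_Iic, mem_Ioc]
        constructor
        · rintro ⟨h1, h2, h3⟩; exact ⟨h2, h1⟩
        · rintro ⟨h1, h2⟩; exact ⟨h2, h1, h2.trans hx.2⟩
      have h2 : ∫ y in Iic x, w' y ∂ρ = u x - u s := by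
        rw [show (∫ y in Iic x, w' y ∂ρ) = ∫ y, w' y ∂(ρ.restrict (Iic x)) from rfl, h1]
        exact (hdens' s hs x hxI (le_of_lt hx.1)).symm
      have h3 : (ν {x}) = ρ {x} := by
        rw [hνdef, hρdef, Measure.restrict_apply (measurableSet_singleton x),
          Measure.restrict_apply (measurableSet_singleton x),
          inter_eq_self_of_subset_left (singleton_subset_iff.2 hxI),
          inter_eq_self_of_subset_left (singleton_subset_iff.2 hx)]
      rw [hgdef]
      dsimp only
      rw [hUu x hxI, h2, h3, inner_sub_left]
      ring
    calc ∫ x in Ioc s t, g x ∂ν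
        = ∫ x in Ioc s t, (⟪u s, w' x⟫ * 2
          + (2 * ⟪∫ y in Iic x, w' y ∂ρ, w' x⟫ - (ρ {x}).toReal * ‖w' x‖ ^ 2)) ∂ν :=
          setIntegral_congr_fun hA hgG
    _ = ∫ x, (⟪u s, w' x⟫ * 2
          + (2 * ⟪∫ y in Iic x, w' y ∂ρ, w' x⟫ - (ρ {x}).toReal * ‖w' x‖ ^ 2)) ∂ρ := by
          rw [hρ]
    _ = (∫ x, ⟪u s, w' x⟫ * 2 ∂ρ)
          + ∫ x, (2 * ⟪∫ y in Iic x, w' y ∂ρ, w' x⟫ - (ρ {x}).toReal * ‖w' x‖ ^ 2) ∂ρ :=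
          integral_add ((hwρ.const_inner (u s)).mul_const 2) hkeyI
    _ = ⟪u s, u t - u s⟫ * 2 + ‖u t - u s‖ ^ 2 := by
          rw [integral_mul_const, integral_inner hwρ, hv, hkey, hv]
    _ = ‖u t‖ ^ 2 - ‖u s‖ ^ 2 := by
          have h := norm_add_sq_real (u s) (u t - u s)
          rw [show u s + (u t - u s) = u t by abel] at h
          linarith
  · -- inequality
    intro B hB hBm
    rw [withDensityᵥ_apply hgI hBm]
    have hres : ν.restrict B = μ.restrict B := by
      rw [hνdef, Measure.restrict_restrict hBm, inter_eq_self_of_subset_left hB]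
    have step1 : ∫ x in B, g x ∂ν ≤ ∫ x in B, 2 * ⟪U x, w' x⟫ ∂ν := by
      refine integral_mono hgI.integrableOn (hterm1.const_mul 2).integrableOn ?_
      intro x
      simp only [hgdef]
      have h0 : (0:ℝ) ≤ (ν {x}).toReal * ‖w' x‖ ^ 2 := by positivity
      linarith
    have step2 : ∫ x in B, 2 * ⟪U x, w' x⟫ ∂ν = 2 * ∫ x in B, ⟪u x, w x⟫ ∂μ := by
      rw [integral_const_mul]
      congr 1
      rw [hres]
      refine integral_congr_ae ?_
      have hw_ae : w =ᵐ[μ.restrict B] w' := hws B hB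
      filter_upwards [hw_ae, ae_restrict_mem hBm] with x h1 h2
      rw [hUu x (hB h2), ← h1]
    exact step1.trans (le_of_eq step2)
end

section
/- Let μ be a positive Radon measure on I = [0,T]. Let g ∈ L¹(I, ℝ; μ) be a nonnegative function and β ≥ 0 be such that 0 ≤ μ({t})·g(t) ≤ β < 1 for all t ∈ I. Let φ ∈ L^∞(I, ℝ; μ) be a nonnegative function satisfying φ(t) ≤ α + ∫_{]0,t]} g(s)φ(s) dμ(s) for all t ∈ I, where α ≥ 0 is a constant. Then φ(t) ≤ α·exp( (1/(1−β)) ∫_{]0,t]} g(s) dμ(s) ) for all t ∈ I. -/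
/-!
Replace `μ` by `ν = g μ` on `[0, T]`, so that the hypothesis reads
`φ t ≤ α + ∫_{]0,t]} φ dν`, the atoms of `ν` weigh at most `β`, and the exponent is `c V t`
with `c = 1 / (1 - β)` and `V t = ν ]0,t]`. As `V` is right-continuous with jumps at most `β`,
the tail estimate `ν {s ∈ ]0,t] | u ≤ V s} ≤ V t - u + β` holds, and the layer-cake formula
turns it into `∫_{]0,t]} exp (k V) dν ≤ (1/k + β) (exp (k V t) - 1)` for all `k > 0`. For
`k = c` the factor is `1`, so `α exp (c V)` is a supersolution; for `k = 2c` it is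
`(1 + β) / 2 < 1`, so `φ ≤ α exp (c V) + ((1 + β) / 2)^n M exp (2c V)` propagates from `n` to
`n + 1` for a bound `M` of `φ`, and `n → ∞` gives the claim.
-/

open MeasureTheory Set Filter Topology Real

namespace GronwallRadon

section Comparison

variable {ν : Measure ℝ} {T α q : ℝ} {φ F G : ℝ → ℝ}

theorem le_of_le_add_setIntegral (hq0 : 0 ≤ q) (hq1 : q < 1)
    (hFi : ∀ t ∈ Icc 0 T, IntegrableOn F (Ioc 0 t) ν)
    (hGi : ∀ t ∈ Icc 0 T, IntegrableOn G (Ioc 0 t) ν)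
    (hF : ∀ t ∈ Icc 0 T, α + ∫ s in Ioc 0 t, F s ∂ν ≤ F t)
    (hG : ∀ t ∈ Icc 0 T, ∫ s in Ioc 0 t, G s ∂ν ≤ q * G t)
    (hφ0 : ∀ t ∈ Icc 0 T, 0 ≤ φ t) (hφFG : ∀ t ∈ Icc 0 T, φ t ≤ F t + G t)
    (hφ : ∀ t ∈ Icc 0 T, φ t ≤ α + ∫ s in Ioc 0 t, φ s ∂ν) :
    ∀ t ∈ Icc 0 T, φ t ≤ F t := by
  have hmem : ∀ t ∈ Icc 0 T, ∀ᵐ s ∂ν.restrict (Ioc 0 t), s ∈ Icc 0 T := fun t ht =>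
    (ae_restrict_mem measurableSet_Ioc).mono fun s hs => ⟨hs.1.le, hs.2.trans ht.2⟩
  have hpow : ∀ n : ℕ, ∀ t ∈ Icc 0 T, φ t ≤ F t + q ^ n * G t := by
    intro n
    induction n with
    | zero => simpa using hφFG
    | succ n ih =>
      intro t ht
      have hint : ∫ s in Ioc 0 t, φ s ∂ν ≤ ∫ s in Ioc 0 t, (F s + q ^ n * G s) ∂ν :=
        integral_mono_of_nonneg ((hmem t ht).mono hφ0)
          ((hFi t ht).add ((hGi t ht).const_mul _)) ((hmem t ht).mono ih)
      rw [integral_add (hFi t ht) ((hGi t ht).const_mul _), integral_const_mul] at hint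
      calc φ t ≤ (α + ∫ s in Ioc 0 t, F s ∂ν) + q ^ n * ∫ s in Ioc 0 t, G s ∂ν := by
            linarith [hφ t ht]
        _ ≤ F t + q ^ n * (q * G t) := by gcongr; exacts [hF t ht, hG t ht]
        _ = F t + q ^ (n + 1) * G t := by ring
  intro t ht
  have hlim : Tendsto (fun n : ℕ => F t + q ^ n * G t) atTop (𝓝 (F t)) := by
    simpa using ((tendsto_pow_atTop_nhds_zero_of_lt_one hq0 hq1).mul_const (G t)).const_add (F t)
  exact ge_of_tendsto' hlim fun n => hpow n t ht

end Comparison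

theorem hasDerivAt_exp_mul (c u : ℝ) :
    HasDerivAt (fun u => exp (c * u)) (c * exp (c * u)) u := by
  simpa [mul_comm] using ((hasDerivAt_id u).const_mul c).exp

theorem intervalIntegral_mul_exp_mul (c x : ℝ) :
    ∫ u in 0..x, c * exp (c * u) = exp (c * x) - 1 := by
  rw [intervalIntegral.integral_eq_sub_of_hasDerivAt (fun u _ => hasDerivAt_exp_mul c u)
    ((by fun_prop : Continuous fun u => c * exp (c * u)).intervalIntegrable 0 x)]
  simp

theorem integral_Ioc_sub_add_mul_mul_exp_mul {c K : ℝ} (β : ℝ) (hc : c ≠ 0) (hK : 0 ≤ K) :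
    ∫ u in Ioc 0 K, (K - u + β) * (c * exp (c * u)) = (c⁻¹ + β) * (exp (c * K) - 1) - K := by
  have hderiv : ∀ u ∈ uIcc 0 K, HasDerivAt (fun u => exp (c * u) * (K - u + β + c⁻¹))
      ((K - u + β) * (c * exp (c * u))) u := by
    intro u _
    refine ((hasDerivAt_exp_mul c u).mul
      ((((hasDerivAt_id u).const_sub K).add_const β).add_const c⁻¹)).congr_deriv ?_
    simp only [id]
    field_simp
    ring
  rw [← intervalIntegral.integral_of_le hK, intervalIntegral.integral_eq_sub_of_hasDerivAt hderiv
    ((by fun_prop : Continuous fun u => (K - u + β) * (c * exp (c * u))).intervalIntegrable 0 K)]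
  simp only [sub_self, zero_add, mul_zero, exp_zero, sub_zero, one_mul]
  ring

section FiniteMeasure

variable {ν : Measure ℝ} [IsFiniteMeasure ν]

theorem monotone_measureReal_Ioc (a : ℝ) : Monotone fun t => ν.real (Ioc a t) :=
  fun _ _ h => measureReal_mono (Ioc_subset_Ioc_right h)

theorem continuousWithinAt_measureReal_Ioc (a x : ℝ) :
    ContinuousWithinAt (fun t => ν.real (Ioc a t)) (Ioi x) x := by
  have hinter : ⋂ r > x, Ioc a r = Ioc a x := by
    ext s
    simp only [mem_iInter, mem_Ioc]
    exact ⟨fun h => ⟨(h (x + 1) (lt_add_one x)).1,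
      le_of_forall_gt_imp_ge_of_dense fun r hr => (h r hr).2⟩,
      fun h r hr => ⟨h.1, h.2.trans hr.le⟩⟩
  have h := tendsto_measure_biInter_gt (μ := ν) (s := Ioc a) (a := x)
    (fun _ _ => measurableSet_Ioc.nullMeasurableSet) (fun _ _ _ hij => Ioc_subset_Ioc_right hij)
    ⟨x + 1, lt_add_one x, measure_ne_top _ _⟩
  rw [hinter] at h
  exact (ENNReal.tendsto_toReal (measure_ne_top _ _)).comp h

theorem measureReal_setOf_le_inter_Ioc_le {β u t : ℝ} (hatom : ∀ s, ν.real {s} ≤ β)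
    (hu : 0 < u) (hut : u ≤ ν.real (Ioc 0 t)) :
    ν.real ({a | u ≤ ν.real (Ioc 0 a)} ∩ Ioc 0 t) ≤ ν.real (Ioc 0 t) - u + β := by
  set A := {a | u ≤ ν.real (Ioc 0 a)} ∩ Ioc 0 t
  rcases A.eq_empty_or_nonempty with hA | ⟨a₀, ha₀⟩
  · rw [hA, measureReal_empty]
    linarith [hatom 0, measureReal_nonneg (μ := ν) (s := {0})]
  -- By right-continuity, `s₀ = inf A` still satisfies `u ≤ ν ]0,s₀]`, and `A ⊆ [s₀, t]`, whose
  -- mass is `ν ]0,t] - ν ]0,s₀] + ν {s₀}`.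
  have hbdd : BddBelow A := ⟨0, fun a ha => ha.2.1.le⟩
  set s₀ := sInf A
  have hs₀t : s₀ ≤ t := (csInf_le hbdd ha₀).trans ha₀.2.2
  have hus₀ : u ≤ ν.real (Ioc 0 s₀) := by
    refine ge_of_tendsto (continuousWithinAt_measureReal_Ioc 0 s₀)
      (eventually_nhdsWithin_of_forall fun y hy => ?_)
    obtain ⟨a, ha, hay⟩ := exists_lt_of_csInf_lt ⟨a₀, ha₀⟩ hy
    exact ha.1.trans (monotone_measureReal_Ioc 0 hay.le)
  have hs₀ : 0 < s₀ := by
    by_contra! h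
    rw [Ioc_eq_empty (not_lt.mpr h), measureReal_empty] at hus₀
    linarith
  have hsplit_t : ν.real (Ioc 0 t) = ν.real (Ioo 0 s₀) + ν.real (Icc s₀ t) := by
    rw [← Ioo_union_Icc_eq_Ioc hs₀ hs₀t,
      measureReal_union (disjoint_left.2 fun _ h₁ h₂ => h₁.2.not_ge h₂.1) measurableSet_Icc]
  have hsplit_s₀ : ν.real (Ioc 0 s₀) = ν.real (Ioo 0 s₀) + ν.real {s₀} := by
    rw [← Ioo_union_right hs₀, measureReal_union (by simp) (measurableSet_singleton _)]
  calc ν.real A ≤ ν.real (Icc s₀ t) :=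
        measureReal_mono fun a ha => ⟨csInf_le hbdd ha, ha.2.2⟩
    _ ≤ ν.real (Ioc 0 t) - u + β := by linarith [hatom s₀]

theorem monotone_exp_mul_measureReal_Ioc {c : ℝ} (hc : 0 ≤ c) :
    Monotone fun s => exp (c * ν.real (Ioc 0 s)) :=
  fun _ _ h => exp_le_exp.2 (mul_le_mul_of_nonneg_left (monotone_measureReal_Ioc 0 h) hc)

theorem integrableOn_exp_mul_measureReal_Ioc {c : ℝ} (hc : 0 ≤ c) (t : ℝ) :
    IntegrableOn (fun s => exp (c * ν.real (Ioc 0 s))) (Ioc 0 t) ν :=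
  ((monotone_exp_mul_measureReal_Ioc hc).monotoneOn _).integrableOn_isCompact isCompact_Icc
    |>.mono_set Ioc_subset_Icc_self

theorem lintegral_exp_mul_measureReal_Ioc_sub_one_le {β c : ℝ}
    (hatom : ∀ s, ν.real {s} ≤ β) (hc : 0 < c) (t : ℝ) :
    ∫⁻ s in Ioc 0 t, ENNReal.ofReal (exp (c * ν.real (Ioc 0 s)) - 1) ∂ν ≤
      ∫⁻ u in Ioc 0 (ν.real (Ioc 0 t)),
        ENNReal.ofReal ((ν.real (Ioc 0 t) - u + β) * (c * exp (c * u))) := by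
  set V : ℝ → ℝ := fun s => ν.real (Ioc 0 s)
  set K := V t
  have hVm : Measurable V := (monotone_measureReal_Ioc 0).measurable
  have htail : ∀ u ∈ Ioi (0 : ℝ),
      ν.restrict (Ioc 0 t) {s | u ≤ V s} * ENNReal.ofReal (c * exp (c * u)) ≤
        (Ioc 0 K).indicator (fun u => ENNReal.ofReal ((K - u + β) * (c * exp (c * u)))) u := by
    intro u hu
    rw [Measure.restrict_apply (measurableSet_le measurable_const hVm)]
    by_cases huK : u ≤ K
    · have hA := measureReal_setOf_le_inter_Ioc_le hatom hu huK
      have huIoc : u ∈ Ioc 0 K := ⟨hu, huK⟩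
      rw [indicator_of_mem huIoc, ENNReal.ofReal_mul (measureReal_nonneg.trans hA),
        ← ofReal_measureReal]
      gcongr
    · have hempty : {s | u ≤ V s} ∩ Ioc 0 t = ∅ :=
        eq_empty_of_forall_notMem fun s hs => huK (hs.1.trans (monotone_measureReal_Ioc 0 hs.2.2))
      simp [hempty]
  calc ∫⁻ s in Ioc 0 t, ENNReal.ofReal (exp (c * V s) - 1) ∂ν
      = ∫⁻ s in Ioc 0 t, ENNReal.ofReal (∫ u in 0..V s, c * exp (c * u)) ∂ν := by
        simp_rw [intervalIntegral_mul_exp_mul]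
    _ = ∫⁻ u in Ioi 0,
          ν.restrict (Ioc 0 t) {s | u ≤ V s} * ENNReal.ofReal (c * exp (c * u)) :=
        lintegral_comp_eq_lintegral_meas_le_mul _ (ae_of_all _ fun _ => measureReal_nonneg)
          hVm.aemeasurable
          (fun u _ => (by fun_prop : Continuous fun u => c * exp (c * u)).intervalIntegrable 0 u)
          (ae_of_all _ fun u => by positivity)
    _ ≤ ∫⁻ u in Ioi 0, (Ioc 0 K).indicator
          (fun u => ENNReal.ofReal ((K - u + β) * (c * exp (c * u)))) u :=
        setLIntegral_mono' measurableSet_Ioi htail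
    _ ≤ ∫⁻ u in Ioc 0 K, ENNReal.ofReal ((K - u + β) * (c * exp (c * u))) :=
        (setLIntegral_le_lintegral _ _).trans_eq (lintegral_indicator measurableSet_Ioc _)

theorem setIntegral_exp_mul_measureReal_Ioc_le {β c : ℝ} (hatom : ∀ s, ν.real {s} ≤ β)
    (hc : 0 < c) (t : ℝ) :
    ∫ s in Ioc 0 t, exp (c * ν.real (Ioc 0 s)) ∂ν ≤
      (c⁻¹ + β) * (exp (c * ν.real (Ioc 0 t)) - 1) := by
  set K := ν.real (Ioc 0 t)
  have hβ0 : 0 ≤ β := measureReal_nonneg.trans (hatom 0)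
  have hK0 : 0 ≤ K := measureReal_nonneg
  have hint := integrableOn_exp_mul_measureReal_Ioc (ν := ν) hc.le t
  have hnn : ∀ u ∈ Ioc 0 K, 0 ≤ (K - u + β) * (c * exp (c * u)) := fun u hu =>
    mul_nonneg (by linarith [hu.2]) (by positivity)
  have hlayer : ∫ s in Ioc 0 t, (exp (c * ν.real (Ioc 0 s)) - 1) ∂ν ≤
      ∫ u in Ioc 0 K, (K - u + β) * (c * exp (c * u)) := by
    rw [integral_eq_lintegral_of_nonneg_ae
      (ae_of_all _ fun s => sub_nonneg.2 (one_le_exp (by positivity)))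
      (hint.sub (integrableOn_const (by simp))).aestronglyMeasurable]
    refine ENNReal.toReal_le_of_le_ofReal (setIntegral_nonneg measurableSet_Ioc hnn) ?_
    rw [ofReal_integral_eq_lintegral_ofReal
      (by fun_prop : Continuous fun u => (K - u + β) * (c * exp (c * u))).integrableOn_Ioc
      (ae_restrict_of_forall_mem measurableSet_Ioc hnn)]
    exact lintegral_exp_mul_measureReal_Ioc_sub_one_le hatom hc t
  rw [integral_sub hint (integrableOn_const (by simp)), setIntegral_const,
    integral_Ioc_sub_add_mul_mul_exp_mul β hc.ne' hK0] at hlayer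
  simp only [smul_eq_mul, mul_one] at hlayer
  linarith

theorem le_add_mul_measureReal_univ_of_le_add_setIntegral {T α C : ℝ} {φ : ℝ → ℝ}
    (hC : 0 ≤ C) (hφ0 : ∀ t ∈ Icc 0 T, 0 ≤ φ t)
    (hφC : ∀ᵐ s ∂ν.restrict (Icc 0 T), φ s ≤ C)
    (hφ : ∀ t ∈ Icc 0 T, φ t ≤ α + ∫ s in Ioc 0 t, φ s ∂ν) :
    ∀ t ∈ Icc 0 T, φ t ≤ α + C * ν.real univ := by
  intro t ht
  have hsub : Ioc 0 t ⊆ Icc 0 T := fun s hs => ⟨hs.1.le, hs.2.trans ht.2⟩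
  have hint : ∫ s in Ioc 0 t, φ s ∂ν ≤ ∫ _ in Ioc 0 t, C ∂ν :=
    integral_mono_of_nonneg
      (ae_restrict_of_forall_mem measurableSet_Ioc fun s hs => hφ0 s (hsub hs))
      (integrableOn_const (by simp)) (ae_restrict_of_ae_restrict_of_subset hsub hφC)
  calc φ t ≤ α + ∫ s in Ioc 0 t, φ s ∂ν := hφ t ht
    _ ≤ α + C * ν.real (Ioc 0 t) := by
      rw [setIntegral_const, smul_eq_mul, mul_comm] at hint
      linarith
    _ ≤ α + C * ν.real univ := by
      have := measureReal_mono (μ := ν) (subset_univ (Ioc 0 t))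
      gcongr

theorem le_mul_exp_of_le_add_setIntegral {T α β C : ℝ} {φ : ℝ → ℝ} (hβ1 : β < 1)
    (hatom : ∀ s, ν.real {s} ≤ β) (hα : 0 ≤ α) (hφ0 : ∀ t ∈ Icc 0 T, 0 ≤ φ t)
    (hφC : ∀ᵐ s ∂ν.restrict (Icc 0 T), φ s ≤ C)
    (hφ : ∀ t ∈ Icc 0 T, φ t ≤ α + ∫ s in Ioc 0 t, φ s ∂ν) :
    ∀ t ∈ Icc 0 T, φ t ≤ α * exp ((1 - β)⁻¹ * ν.real (Ioc 0 t)) := by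
  set c := (1 - β)⁻¹
  have hβ0 : 0 ≤ β := measureReal_nonneg.trans (hatom 0)
  have hc : 0 < c := inv_pos.2 (by linarith)
  set M := max C 0 * ν.real univ
  have hM : 0 ≤ M := mul_nonneg (le_max_right _ _) measureReal_nonneg
  have hφM := le_add_mul_measureReal_univ_of_le_add_setIntegral (le_max_right C 0) hφ0
    (hφC.mono fun _ h => h.trans (le_max_left C 0)) hφ
  have hexp : ∀ {k : ℝ}, 0 ≤ k → ∀ t, 1 ≤ exp (k * ν.real (Ioc 0 t)) := fun hk _ =>
    one_le_exp (mul_nonneg hk measureReal_nonneg)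
  -- With exponent `2c` the constant of `setIntegral_exp_mul_measureReal_Ioc_le` is `(1 + β) / 2`.
  refine le_of_le_add_setIntegral (G := fun t => M * exp (2 * c * ν.real (Ioc 0 t)))
    (q := (1 + β) / 2) (by linarith) (by linarith)
    (fun t _ => (integrableOn_exp_mul_measureReal_Ioc hc.le t).const_mul α)
    (fun t _ => (integrableOn_exp_mul_measureReal_Ioc (by positivity) t).const_mul M)
    (fun t _ => ?_) (fun t _ => ?_) hφ0 (fun t ht => ?_) hφ
  · have h := setIntegral_exp_mul_measureReal_Ioc_le hatom hc t
    rw [inv_inv, sub_add_cancel, one_mul] at h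
    rw [integral_const_mul]
    nlinarith [mul_le_mul_of_nonneg_left h hα]
  · have h := setIntegral_exp_mul_measureReal_Ioc_le hatom (by positivity : 0 < 2 * c) t
    rw [mul_inv, inv_inv] at h
    rw [integral_const_mul]
    nlinarith [mul_le_mul_of_nonneg_left h hM, hexp (k := 2 * c) (by positivity) t]
  · nlinarith [hφM t ht, hexp hc.le t, hexp (k := 2 * c) (by positivity) t]

end FiniteMeasure

section WithDensity

variable {X : Type*} [MeasurableSpace X] {μ : Measure X} {S s : Set X} {g : X → ℝ}

theorem setIntegral_restrict_withDensity_ofReal (hs : MeasurableSet s) (hsS : s ⊆ S)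
    (hg : AEMeasurable g (μ.restrict S)) (hg0 : ∀ x ∈ s, 0 ≤ g x) (f : X → ℝ) :
    ∫ x in s, f x ∂(μ.restrict S).withDensity (fun x => ENNReal.ofReal (g x)) =
      ∫ x in s, g x * f x ∂μ := by
  rw [setIntegral_withDensity_eq_setIntegral_toReal_smul₀
    (hg.mono_measure Measure.restrict_le_self).ennreal_ofReal
    (ae_of_all _ fun _ => ENNReal.ofReal_lt_top) f hs,
    Measure.restrict_restrict hs, inter_eq_left.2 hsS]
  exact setIntegral_congr_fun hs fun x hx => by simp [ENNReal.toReal_ofReal (hg0 x hx)]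

theorem measureReal_singleton_restrict_withDensity_ofReal_le [MeasurableSingletonClass X] {β : ℝ}
    (hβ0 : 0 ≤ β) (hg0 : ∀ x ∈ S, 0 ≤ g x) (hatom : ∀ x ∈ S, μ.real {x} * g x ≤ β)
    (x : X) :
    ((μ.restrict S).withDensity fun x => ENNReal.ofReal (g x)).real {x} ≤ β := by
  rw [measureReal_def, withDensity_apply _ (measurableSet_singleton x), lintegral_singleton,
    Measure.restrict_apply (measurableSet_singleton x), ENNReal.toReal_mul]
  by_cases hx : x ∈ S
  · rw [inter_eq_left.2 (singleton_subset_iff.2 hx), ENNReal.toReal_ofReal (hg0 x hx), mul_comm]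
    exact hatom x hx
  · simp [singleton_inter_eq_empty.2 hx, hβ0]

theorem _root_.MeasureTheory.MemLp.ae_le_toReal_eLpNorm_top {f : X → ℝ} (hf : MemLp f ⊤ μ) :
    ∀ᵐ x ∂μ, f x ≤ (eLpNorm f ⊤ μ).toReal := by
  filter_upwards [ae_le_eLpNormEssSup (f := f) (μ := μ)] with x hx
  rw [eLpNorm_exponent_top]
  calc f x ≤ ‖f x‖ := le_norm_self _
    _ = ‖f x‖ₑ.toReal := (toReal_enorm _).symm
    _ ≤ (eLpNormEssSup f μ).toReal := ENNReal.toReal_mono (by simpa using hf.2.ne) hx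

end WithDensity

end GronwallRadon

open GronwallRadon

theorem gronwall_radon_measure_general (T : ℝ)
    (μ : Measure ℝ)
    (g : ℝ → ℝ) (hg_int : IntegrableOn g (Icc 0 T) μ)
    (hg0 : ∀ t ∈ Icc 0 T, 0 ≤ g t)
    (β : ℝ) (hβ0 : 0 ≤ β) (hβ1 : β < 1)
    (hatom : ∀ t ∈ Icc 0 T, (μ {t}).toReal * g t ≤ β)
    (φ : ℝ → ℝ) (hφ : MemLp φ ⊤ (μ.restrict (Icc 0 T)))
    (hφ0 : ∀ t ∈ Icc 0 T, 0 ≤ φ t)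
    (α : ℝ) (hα : 0 ≤ α)
    (hineq : ∀ t ∈ Icc 0 T, φ t ≤ α + ∫ s in Ioc 0 t, g s * φ s ∂μ) :
    ∀ t ∈ Icc 0 T, φ t ≤ α * Real.exp ((1 / (1 - β)) * ∫ s in Ioc 0 t, g s ∂μ) := by
  set ν := (μ.restrict (Icc 0 T)).withDensity fun s => ENNReal.ofReal (g s)
  have : IsFiniteMeasure ν := isFiniteMeasure_withDensity_ofReal hg_int.2
  have hconv : ∀ t ∈ Icc 0 T, ∀ f : ℝ → ℝ,
      ∫ s in Ioc 0 t, f s ∂ν = ∫ s in Ioc 0 t, g s * f s ∂μ := fun t ht =>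
    have hsub : Ioc 0 t ⊆ Icc 0 T := fun s hs => ⟨hs.1.le, hs.2.trans ht.2⟩
    setIntegral_restrict_withDensity_ofReal measurableSet_Ioc hsub hg_int.aemeasurable
      fun s hs => hg0 s (hsub hs)
  have hφC :
      ∀ᵐ s ∂ν.restrict (Icc 0 T), φ s ≤ (eLpNorm φ ⊤ (μ.restrict (Icc 0 T))).toReal :=
    (Measure.restrict_le_self.absolutelyContinuous.trans
      (withDensity_absolutelyContinuous _ _)).ae_le hφ.ae_le_toReal_eLpNorm_top
  intro t ht
  have h := le_mul_exp_of_le_add_setIntegral hβ1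
    (measureReal_singleton_restrict_withDensity_ofReal_le hβ0 hg0 hatom) hα hφ0 hφC
    (fun t ht => (hconv t ht φ).symm ▸ hineq t ht) t ht
  have hV : ν.real (Ioc 0 t) = ∫ s in Ioc 0 t, g s ∂μ := by simpa using hconv t ht 1
  rwa [hV, ← one_div] at h

/-- Gronwall lemma for Radon measures. Let `μ` be a positive Radon
measure on `I = [0,T]`, `g ∈ L¹(I,ℝ;μ)` nonnegative with `μ({t}) g(t) ≤ β < 1` on `I`,
and `φ ∈ L^∞(I,ℝ;μ)` nonnegative with `φ(t) ≤ α + ∫_{]0,t]} g φ dμ` on `I` for a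
constant `α ≥ 0`. Then `φ(t) ≤ α exp((1/(1-β)) ∫_{]0,t]} g dμ)` on `I`. -/
theorem gronwall_radon_measure (T : ℝ) (hT : 0 < T)
    (μ : Measure ℝ) [IsFiniteMeasure μ]
    (g : ℝ → ℝ) (hg_int : IntegrableOn g (Icc 0 T) μ)
    (hg0 : ∀ t ∈ Icc 0 T, 0 ≤ g t)
    (β : ℝ) (hβ0 : 0 ≤ β) (hβ1 : β < 1)
    (hatom : ∀ t ∈ Icc 0 T, (μ {t}).toReal * g t ≤ β)
    (φ : ℝ → ℝ) (hφ : MemLp φ ⊤ (μ.restrict (Icc 0 T)))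
    (hφ0 : ∀ t ∈ Icc 0 T, 0 ≤ φ t)
    (α : ℝ) (hα : 0 ≤ α)
    (hineq : ∀ t ∈ Icc 0 T, φ t ≤ α + ∫ s in Ioc 0 t, g s * φ s ∂μ) :
    ∀ t ∈ Icc 0 T, φ t ≤ α * Real.exp ((1 / (1 - β)) * ∫ s in Ioc 0 t, g s ∂μ) :=
  gronwall_radon_measure_general T μ g hg_int hg0 β hβ0 hβ1 hatom φ hφ hφ0 α hα hineq
end

section
/- Let (α_i), (β_i), (γ_i) and (a_i) be sequences of nonnegative real numbers such that a_{i+1} ≤ α_i + β_i(a₀ + a₁ + ⋯ + a_{i−1}) + (1 + γ_i)a_i for every i ∈ ℕ. Then for every j ≥ 1, a_j ≤ (a₀ + Σ_{k=0}^{j−1} α_k)·exp( Σ_{k=0}^{j−1} (k·β_k + γ_k) ). -/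
/-- If nonnegative real sequences `(αᵢ), (βᵢ), (γᵢ), (aᵢ)` satisfy
`a_{i+1} ≤ αᵢ + βᵢ (a₀ + ⋯ + a_{i-1}) + (1 + γᵢ) aᵢ` for all `i`, then for every `j ≥ 1`,
`a_j ≤ (a₀ + ∑_{k<j} α_k) exp (∑_{k<j} (k β_k + γ_k))`. -/
theorem discrete_gronwall_lemma (α β γ a : ℕ → ℝ)
    (hα : ∀ i, 0 ≤ α i) (hβ : ∀ i, 0 ≤ β i) (hγ : ∀ i, 0 ≤ γ i) (ha : ∀ i, 0 ≤ a i)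
    (hrec : ∀ i : ℕ,
      a (i + 1) ≤ α i + β i * (∑ k ∈ Finset.range i, a k) + (1 + γ i) * a i) :
    ∀ j : ℕ, 1 ≤ j →
      a j ≤ (a 0 + ∑ k ∈ Finset.range j, α k) *
        Real.exp (∑ k ∈ Finset.range j, ((k : ℝ) * β k + γ k)) := by
  set c : ℕ → ℝ := fun k => (k : ℝ) * β k + γ k with hc
  have hc0 : ∀ k, 0 ≤ c k := fun k =>
    add_nonneg (mul_nonneg (Nat.cast_nonneg k) (hβ k)) (hγ k)
  set A : ℕ → ℝ := fun j => a 0 + ∑ k ∈ Finset.range j, α k with hA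
  set P : ℕ → ℝ := fun j => ∏ k ∈ Finset.range j, (1 + c k) with hP
  have hP1 : ∀ j, 1 ≤ P j := by
    intro j
    simp only [hP]
    calc (1:ℝ) = ∏ _k ∈ Finset.range j, 1 := by simp
      _ ≤ ∏ k ∈ Finset.range j, (1 + c k) :=
        Finset.prod_le_prod (fun k _ => zero_le_one) (fun k _ => by linarith [hc0 k])
  have hA0 : ∀ j, 0 ≤ A j := fun j =>
    add_nonneg (ha 0) (Finset.sum_nonneg fun k _ => hα k)
  have hAmono : ∀ j, A j ≤ A (j + 1) := fun j => by
    simp only [hA, Finset.sum_range_succ]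
    linarith [hα j]
  set b : ℕ → ℝ := fun j => A j * P j with hb
  have hbmono : Monotone b := monotone_nat_of_le_succ fun j => by
    have hps : P (j + 1) = P j * (1 + c j) := Finset.prod_range_succ _ _
    have h1 := hP1 j
    have h2 := hA0 j
    have h3 := hAmono j
    have h4 := hc0 j
    have h5 := hA0 (j + 1)
    simp only [hb, hps]
    have h6 : 0 ≤ P j := by linarith
    nlinarith [mul_nonneg (mul_nonneg h5 h6) h4, mul_le_mul_of_nonneg_right h3 h6]
  have key : ∀ j, a j ≤ b j := by
    intro j
    induction j using Nat.strong_induction_on with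
    | _ j ih =>
      match j with
      | 0 => simp [hb, hA, hP]
      | Nat.succ i =>
        have hS : ∑ k ∈ Finset.range i, a k ≤ (i : ℝ) * b i := by
          calc ∑ k ∈ Finset.range i, a k ≤ ∑ _k ∈ Finset.range i, b i :=
                Finset.sum_le_sum fun k hk =>
                  (ih k (Nat.lt_succ_of_lt (Finset.mem_range.mp hk))).trans
                    (hbmono (Finset.mem_range.mp hk).le)
            _ = (i : ℝ) * b i := by
                simp [Finset.sum_const, nsmul_eq_mul]
        have hai : a i ≤ b i := ih i (Nat.lt_succ_self i)
        have hb0 : 0 ≤ b i := (ha i).trans hai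
        have hbsucc : b (i + 1) = (A i + α i) * (P i * (1 + c i)) := by
          simp only [hb, hA, hP, Finset.sum_range_succ, Finset.prod_range_succ]
          ring
        have step : a (i + 1) ≤ α i + (1 + c i) * b i := by
          have h1 := hrec i
          have h2 := mul_le_mul_of_nonneg_left hS (hβ i)
          have h3 := mul_le_mul_of_nonneg_left hai
            (by linarith [hγ i] : (0 : ℝ) ≤ 1 + γ i)
          have : c i = (i : ℝ) * β i + γ i := rfl
          nlinarith
        have step2 : α i + (1 + c i) * b i ≤ b (i + 1) := by
          rw [hbsucc]
          have hbi : b i = A i * P i := rfl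
          rw [hbi]
          have h6 : 0 ≤ P i := by linarith [hP1 i]
          nlinarith [mul_nonneg (hα i) (by linarith [hP1 i] : (0:ℝ) ≤ P i - 1),
            mul_nonneg (mul_nonneg (hα i) h6) (hc0 i)]
        exact step.trans step2
  intro j _
  have hPexp : P j ≤ Real.exp (∑ k ∈ Finset.range j, c k) := by
    calc P j ≤ ∏ k ∈ Finset.range j, Real.exp (c k) :=
          Finset.prod_le_prod (fun k _ => by linarith [hc0 k])
            (fun k _ => by linarith [Real.add_one_le_exp (c k)])
      _ = Real.exp (∑ k ∈ Finset.range j, c k) := (Real.exp_sum _ _).symm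
  calc a j ≤ b j := key j
    _ ≤ A j * Real.exp (∑ k ∈ Finset.range j, c k) :=
        mul_le_mul_of_nonneg_left hPexp (hA0 j)
end

section
/- Let H be a separable real Hilbert space and ν a positive Radon measure on I = [0,T]. Let u, v : I → H be BVRC mappings with u(0) = v(0), whose differential measures have densities du/dν, dv/dν with respect to ν. Suppose there exist a nonnegative function g ∈ L¹(I, ℝ; ν) with ν({t})·g(t) = 0 for all t ∈ I, and a nonnegative function Δ ∈ L¹(I, ℝ; ν), such that for ν-almost every t ∈ I, ⟨u(t) − v(t), (du/dν)(t) − (dv/dν)(t)⟩ ≤ g(t)‖u(t) − v(t)‖² + Δ(t). Then sup_{t ∈ I} ‖u(t) − v(t)‖² ≤ ( 2∫_{]0,T]} Δ(s) dν(s) )·exp( 2∫_{]0,T]} g(s) dν(s) ). -/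
/-!
Put `x = u - v` and `w = wu - wv`, so that `x t = ∫_{]0,t]} w dν`. Writing `‖x t‖²` as the double
integral of `⟪w r, w s⟫` and splitting it along the diagonal by Fubini gives
`‖x t‖² ≤ 2 ∫_{]0,t]} ⟪x, w⟫ dν`: the diagonal carries the atoms of `ν` and only helps. With the
hypothesis this becomes `φ t ≤ C + ∫_{]0,t]} 2 g φ dν` for `φ = ‖x‖²` and `C = 2 ∫ Δ dν`.

For the Gronwall step, `G t = C + ∫_{]0,t]} 2 g φ dν` satisfies
`G t - G s ≤ G t (F t - F s)` with `F t = ∫_{]0,t]} 2 g dν`, and `F` is continuous because `ν`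
has no atom where `g ≠ 0`. By the intermediate value theorem `[0, T]` splits into `n` pieces on
which `F` grows by `F T / n` each, so `G T (1 - F T / n)ⁿ ≤ G 0`; let `n → ∞`.
-/

open MeasureTheory Set RealInnerProductSpace
open Filter Topology

section NormedSpace

variable {E : Type*} [NormedAddCommGroup E] [NormedSpace ℝ E]

theorem setIntegral_Ioc_sub_setIntegral_Ioc {ν : Measure ℝ} {f : ℝ → E} {a r s : ℝ}
    (hf : IntegrableOn f (Ioc a s) ν) (har : a ≤ r) (hrs : r ≤ s) :
    ∫ x in Ioc a s, f x ∂ν - ∫ x in Ioc a r, f x ∂ν = ∫ x in Ioc r s, f x ∂ν := by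
  rw [← Ioc_union_Ioc_eq_Ioc har hrs, setIntegral_union (Ioc_disjoint_Ioc_of_le le_rfl)
    measurableSet_Ioc (hf.mono_set (Ioc_subset_Ioc_right hrs))
    (hf.mono_set (Ioc_subset_Ioc_left har)), add_sub_cancel_left]

theorem continuousOn_primitive_of_smul_eq_zero {ν : Measure ℝ} [IsLocallyFiniteMeasure ν]
    {f : ℝ → E} {a b : ℝ} (hf : IntegrableOn f (Ioc a b) ν)
    (hatom : ∀ s ∈ Ioc a b, ν.real {s} • f s = 0) :
    ContinuousOn (fun t => ∫ r in Ioc a t, f r ∂ν) (Icc a b) := by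
  intro t₀ ht₀
  -- Removing the point `t₀` from `ν` changes none of the integrals, and leaves no atom at `t₀`.
  set μ := ν.restrict {t₀}ᶜ
  have hf_off : ∀ᵐ r ∂ν, r ∈ Ioc a b → r = t₀ → f r = 0 := by
    by_cases ht₀' : t₀ ∈ Ioc a b
    · rcases smul_eq_zero.1 (hatom t₀ ht₀') with h | h
      · have : ν {t₀} = 0 :=
          (measureReal_eq_zero_iff isCompact_singleton.measure_lt_top.ne).1 h
        filter_upwards [measure_eq_zero_iff_ae_notMem.1 this] with r hr _ hrt
        exact absurd hrt hr
      · exact Eventually.of_forall fun r _ hr => hr ▸ h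
    · exact Eventually.of_forall fun r hr hrt => absurd (hrt ▸ hr) ht₀'
  have heq : ∀ t ∈ Icc a b, ∫ r in a..t, f r ∂μ = ∫ r in Ioc a t, f r ∂ν := by
    intro t ht
    rw [intervalIntegral.integral_of_le ht.1, Measure.restrict_restrict measurableSet_Ioc,
      ← setIntegral_eq_of_subset_of_ae_sdiff_eq_zero measurableSet_Ioc.nullMeasurableSet
        inter_subset_left]
    filter_upwards [hf_off] with r hr hr'
    exact hr (Ioc_subset_Ioc_right ht.2 hr'.1) (of_not_not fun h => hr'.2 ⟨hr'.1, h⟩)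
  have hμ : μ {t₀} = 0 := by simp [μ, Measure.restrict_apply]
  have hfμ : IntervalIntegrable f μ (min a a) (max a b) := by
    have hab : a ≤ b := ht₀.1.trans ht₀.2
    rw [min_self, max_eq_right hab, intervalIntegrable_iff_integrableOn_Ioc_of_le hab]
    exact hf.mono_measure Measure.restrict_le_self
  exact (intervalIntegral.continuousWithinAt_primitive hμ hfμ).congr
    (fun t ht => (heq t ht).symm) (heq t₀ ht₀).symm

theorem aestronglyMeasurable_integral_Iic {μ ν : Measure ℝ} [SFinite ν] {w : ℝ → E}
    (hw : AEStronglyMeasurable w ν) :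
    AEStronglyMeasurable (fun s => ∫ r in Iic s, w r ∂ν) μ := by
  have hK : AEStronglyMeasurable ({p : ℝ × ℝ | p.2 ≤ p.1}.indicator fun p => w p.2)
      (μ.prod ν) :=
    hw.comp_snd.indicator (measurableSet_le measurable_snd measurable_fst)
  refine hK.integral_prod_right'.congr (Eventually.of_forall fun s => ?_)
  change _ = ∫ r in Iic s, w r ∂ν
  rw [← integral_indicator measurableSet_Iic]
  rfl

theorem norm_integral_Iic_le {μ : Measure ℝ} {w : ℝ → E} (hw : Integrable w μ) (s : ℝ) :
    ‖∫ r in Iic s, w r ∂μ‖ ≤ ∫ r, ‖w r‖ ∂μ :=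
  (norm_integral_le_integral_norm _).trans
    (setIntegral_le_integral hw.norm (Eventually.of_forall fun _ => norm_nonneg _))

theorem integrable_mul_norm_integral_Iic_sq {μ : Measure ℝ} [SFinite μ] {w : ℝ → E}
    {g : ℝ → ℝ} (hw : Integrable w μ) (hg : Integrable g μ) :
    Integrable (fun s => g s * ‖∫ r in Iic s, w r ∂μ‖ ^ 2) μ := by
  refine hg.mul_bdd (c := (∫ r, ‖w r‖ ∂μ) ^ 2)
    ((aestronglyMeasurable_integral_Iic hw.1).norm.pow 2) (Eventually.of_forall fun s => ?_)
  rw [norm_pow, norm_norm]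
  exact pow_le_pow_left₀ (norm_nonneg _) (norm_integral_Iic_le hw s) 2

theorem integral_Iic_eq_integral_Iio_add [CompleteSpace E] {μ : Measure ℝ} {w : ℝ → E}
    (hw : Integrable w μ) (s : ℝ) :
    ∫ r in Iic s, w r ∂μ = ∫ r in Iio s, w r ∂μ + μ.real {s} • w s := by
  rw [← Iio_union_right, setIntegral_union (by simp) (measurableSet_singleton s)
    hw.integrableOn hw.integrableOn, Measure.restrict_singleton, integral_smul_measure,
    integral_dirac]
  rfl

theorem integral_Iic_restrict_Ioc_ae_eq (ν : Measure ℝ) (w : ℝ → E) (a t : ℝ) :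
    ∀ᵐ s ∂ν.restrict (Ioc a t),
      ∫ r in Iic s, w r ∂ν.restrict (Ioc a t) = ∫ r in Ioc a s, w r ∂ν := by
  filter_upwards [ae_restrict_mem measurableSet_Ioc] with s hs
  rw [Measure.restrict_restrict measurableSet_Iic, Iic_inter_Ioc_of_le hs.2]

end NormedSpace

theorem le_div_one_sub_pow_of_sub_le_mul_sub {F G : ℝ → ℝ} {a b : ℝ} (hab : a ≤ b)
    (hF : ContinuousOn F (Icc a b))
    (h : ∀ s ∈ Icc a b, ∀ t ∈ Icc a b, s ≤ t → G t - G s ≤ G t * (F t - F s))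
    {n : ℕ} {δ : ℝ} (hδ : δ < 1) (hnδ : F a + n * δ = F b) :
    G b ≤ G a / (1 - δ) ^ n := by
  have hδ' : 0 < 1 - δ := sub_pos.2 hδ
  have hpart : ∀ i ≤ n, ∃ c ∈ Icc a b, F c = F a + i * δ ∧ G c ≤ G a / (1 - δ) ^ i := by
    intro i
    induction i with
    | zero => exact fun _ => ⟨a, left_mem_Icc.2 hab, by simp, by simp⟩
    | succ i ih =>
      intro hi
      obtain ⟨c, hc, hFc, hGc⟩ := ih (by omega)
      have hin : ((i : ℝ) + 1) ≤ n := by exact_mod_cast hi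
      have htarget : F a + (i + 1 : ℕ) * δ ∈ uIcc (F c) (F b) := by
        rw [mem_uIcc, hFc, ← hnδ]
        push_cast
        rcases le_total 0 δ with h0 | h0
        · left; constructor <;> nlinarith
        · right; constructor <;> nlinarith
      obtain ⟨c', hc', hFc'⟩ := intermediate_value_uIcc
        (hF.mono (uIcc_subset_Icc hc ⟨hab, le_rfl⟩)) htarget
      rw [uIcc_of_le hc.2] at hc'
      have hc'ab : c' ∈ Icc a b := ⟨hc.1.trans hc'.1, hc'.2⟩
      refine ⟨c', hc'ab, hFc', ?_⟩
      have hstep := h c hc c' hc'ab hc'.1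
      rw [hFc', hFc] at hstep
      rw [pow_succ, ← div_div, le_div_iff₀ hδ']
      calc G c' * (1 - δ) ≤ G c := by push_cast at hstep; nlinarith
        _ ≤ G a / (1 - δ) ^ i := hGc
  obtain ⟨c, hc, hFc, hGc⟩ := hpart n le_rfl
  have hlast := h c hc b ⟨hab, le_rfl⟩ hc.2
  rw [hFc, hnδ, sub_self, mul_zero] at hlast
  linarith

theorem le_mul_exp_sub_of_sub_le_mul_sub {F G : ℝ → ℝ} {a b : ℝ} (hab : a ≤ b)
    (hF : ContinuousOn F (Icc a b))
    (h : ∀ s ∈ Icc a b, ∀ t ∈ Icc a b, s ≤ t → G t - G s ≤ G t * (F t - F s)) :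
    G b ≤ G a * Real.exp (F b - F a) := by
  set B := F b - F a
  have hlim : Tendsto (fun n : ℕ => G a / (1 + -B / n) ^ n) atTop (𝓝 (G a * Real.exp B)) := by
    rw [← inv_inv (Real.exp B), ← Real.exp_neg, ← div_eq_mul_inv]
    exact tendsto_const_nhds.div (Real.tendsto_one_add_div_pow_exp _) (Real.exp_ne_zero _)
  obtain ⟨N, hN⟩ := exists_nat_gt B
  refine ge_of_tendsto hlim (eventually_atTop.2 ⟨N + 1, fun n hn => ?_⟩)
  have hn : (N : ℝ) + 1 ≤ n := by exact_mod_cast hn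
  have hn0 : (0 : ℝ) < n := by linarith [N.cast_nonneg (α := ℝ)]
  rw [neg_div, ← sub_eq_add_neg]
  refine le_div_one_sub_pow_of_sub_le_mul_sub hab hF h ((div_lt_one hn0).2 (by linarith)) ?_
  rw [mul_div_cancel₀ _ hn0.ne']
  ring

theorem le_mul_exp_integral_of_le_add_integral {ν : Measure ℝ} [IsLocallyFiniteMeasure ν]
    {k φ : ℝ → ℝ} {a t C : ℝ} (hat : a ≤ t) (hk : IntegrableOn k (Ioc a t) ν)
    (hk0 : ∀ s ∈ Ioc a t, 0 ≤ k s) (hatom : ∀ s ∈ Ioc a t, ν.real {s} * k s = 0)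
    (hφ0 : ∀ s ∈ Ioc a t, 0 ≤ φ s) (hkφ : IntegrableOn (fun s => k s * φ s) (Ioc a t) ν)
    (hφ : ∀ s ∈ Icc a t, φ s ≤ C + ∫ r in Ioc a s, k r * φ r ∂ν) :
    φ t ≤ C * Real.exp (∫ s in Ioc a t, k s ∂ν) := by
  set F : ℝ → ℝ := fun s => ∫ r in Ioc a s, k r ∂ν
  set G : ℝ → ℝ := fun s => C + ∫ r in Ioc a s, k r * φ r ∂ν
  have hG_sub : ∀ r ∈ Icc a t, ∀ s ∈ Icc a t, r ≤ s →
      G s - G r = ∫ x in Ioc r s, k x * φ x ∂ν := fun r hr s hs hrs => by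
    rw [← setIntegral_Ioc_sub_setIntegral_Ioc (hkφ.mono_set (Ioc_subset_Ioc_right hs.2))
      hr.1 hrs]
    ring
  have hG_mono : ∀ r ∈ Icc a t, ∀ s ∈ Icc a t, r ≤ s → G r ≤ G s := fun r hr s hs hrs => by
    have := hG_sub r hr s hs hrs
    have : 0 ≤ ∫ x in Ioc r s, k x * φ x ∂ν := setIntegral_nonneg measurableSet_Ioc fun x hx =>
      have hx' : x ∈ Ioc a t := ⟨hr.1.trans_lt hx.1, hx.2.trans hs.2⟩
      mul_nonneg (hk0 x hx') (hφ0 x hx')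
    linarith
  have hstep : ∀ r ∈ Icc a t, ∀ s ∈ Icc a t, r ≤ s → G s - G r ≤ G s * (F s - F r) := by
    intro r hr s hs hrs
    rw [hG_sub r hr s hs hrs, setIntegral_Ioc_sub_setIntegral_Ioc
      (hk.mono_set (Ioc_subset_Ioc_right hs.2)) hr.1 hrs, ← integral_const_mul]
    have hsub : Ioc r s ⊆ Ioc a t := Ioc_subset_Ioc hr.1 hs.2
    refine setIntegral_mono_on (hkφ.mono_set hsub) ((hk.mono_set hsub).const_mul _)
      measurableSet_Ioc fun x hx => ?_
    have hx' : x ∈ Icc a t := ⟨hr.1.trans hx.1.le, hx.2.trans hs.2⟩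
    rw [mul_comm (G s)]
    exact mul_le_mul_of_nonneg_left ((hφ x hx').trans (hG_mono x hx' s hs hx.2))
      (hk0 x (hsub hx))
  have hF : ContinuousOn F (Icc a t) :=
    continuousOn_primitive_of_smul_eq_zero hk fun s hs => hatom s hs
  calc φ t ≤ G t := hφ t ⟨hat, le_rfl⟩
    _ ≤ G a * Real.exp (F t - F a) := le_mul_exp_sub_of_sub_le_mul_sub hat hF hstep
    _ = C * Real.exp (∫ s in Ioc a t, k s ∂ν) := by simp [G, F]

section InnerProductSpace

variable {E : Type*} [NormedAddCommGroup E] [InnerProductSpace ℝ E]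

theorem integrable_inner_integral_Iic {μ : Measure ℝ} [SFinite μ] {w : ℝ → E}
    (hw : Integrable w μ) : Integrable (fun s => ⟪∫ r in Iic s, w r ∂μ, w s⟫) μ := by
  refine (hw.norm.const_mul (∫ r, ‖w r‖ ∂μ)).mono'
    ((aestronglyMeasurable_integral_Iic hw.1).inner hw.1) (Eventually.of_forall fun s => ?_)
  exact (norm_inner_le_norm _ _).trans
    (mul_le_mul_of_nonneg_right (norm_integral_Iic_le hw s) (norm_nonneg _))

theorem norm_integral_sq_le_two_mul_integral_inner_integral_Iic [CompleteSpace E]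
    {μ : Measure ℝ} [SFinite μ] {w : ℝ → E} (hw : Integrable w μ) :
    ‖∫ s, w s ∂μ‖ ^ 2 ≤ 2 * ∫ s, ⟪∫ r in Iic s, w r ∂μ, w s⟫ ∂μ := by
  set X : ℝ → E := fun s => ∫ r in Iic s, w r ∂μ
  have hXw : Integrable (fun s => ⟪X s, w s⟫) μ := integrable_inner_integral_Iic hw
  -- The diagonal `r = s`, missing from `K`, contributes `∫ μ{s} ‖w s‖² ≥ 0` to `‖∫ w‖²`.
  set K : ℝ × ℝ → ℝ := {p | p.1 < p.2}.indicator fun p => ⟪w p.1, w p.2⟫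
  have hK : Integrable K (μ.prod μ) := by
    refine (hw.norm.mul_prod hw.norm).mono'
      ((hw.1.comp_fst.inner hw.1.comp_snd).indicator
        (measurableSet_lt measurable_fst measurable_snd))
      (Eventually.of_forall fun p => ?_)
    exact (norm_indicator_le_norm_self _ _).trans (norm_inner_le_norm _ _)
  have hrow : ∀ r, ∫ s, K (r, s) ∂μ = ⟪w r, ∫ s, w s ∂μ - X r⟫ := by
    intro r
    rw [← integral_add_compl measurableSet_Iic hw, compl_Iic, add_sub_cancel_left,
      ← integral_inner hw.integrableOn, ← integral_indicator measurableSet_Ioi]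
    rfl
  have hcol : ∀ s, ∫ r, K (r, s) ∂μ = ⟪X s, w s⟫ - μ.real {s} * ‖w s‖ ^ 2 := by
    intro s
    have : ∫ r, K (r, s) ∂μ = ⟪∫ r in Iio s, w r ∂μ, w s⟫ := by
      rw [real_inner_comm, ← integral_inner hw.integrableOn,
        ← integral_indicator measurableSet_Iio]
      congr 1
      ext r
      simp only [K, indicator, mem_ofPred_eq, mem_Iio, real_inner_comm]
    rw [this, show X s = _ from integral_Iic_eq_integral_Iio_add hw s, inner_add_left,
      real_inner_smul_left, real_inner_self_eq_norm_sq]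
    ring
  have hsplit : ‖∫ s, w s ∂μ‖ ^ 2 = ∫ r, ⟪X r, w r⟫ ∂μ + ∫ r, ∫ s, K (r, s) ∂μ ∂μ := by
    rw [← integral_add hXw hK.integral_prod_left, ← real_inner_self_eq_norm_sq,
      ← integral_inner hw]
    congr 1
    ext r
    rw [hrow, ← real_inner_comm (w r), ← inner_add_left, add_sub_cancel]
  have hswap : ∫ r, ∫ s, K (r, s) ∂μ ∂μ ≤ ∫ s, ⟪X s, w s⟫ ∂μ := by
    rw [integral_integral_swap (f := fun r s => K (r, s)) hK]
    refine integral_mono hK.swap.integral_prod_left hXw fun s => ?_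
    rw [hcol]
    have : 0 ≤ μ.real {s} * ‖w s‖ ^ 2 := by positivity
    linarith
  linarith

theorem norm_integral_sq_le_of_inner_le [CompleteSpace E] {μ : Measure ℝ} [SFinite μ]
    {w : ℝ → E} {g Δ : ℝ → ℝ} (hw : Integrable w μ) (hg : Integrable g μ) (hΔ : Integrable Δ μ)
    (h : ∀ᵐ s ∂μ,
      ⟪∫ r in Iic s, w r ∂μ, w s⟫ ≤ g s * ‖∫ r in Iic s, w r ∂μ‖ ^ 2 + Δ s) :
    ‖∫ s, w s ∂μ‖ ^ 2 ≤ 2 * ∫ s, Δ s ∂μ + ∫ s, 2 * g s * ‖∫ r in Iic s, w r ∂μ‖ ^ 2 ∂μ := by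
  have hgX := integrable_mul_norm_integral_Iic_sq hw hg
  calc ‖∫ s, w s ∂μ‖ ^ 2 ≤ 2 * ∫ s, ⟪∫ r in Iic s, w r ∂μ, w s⟫ ∂μ :=
        norm_integral_sq_le_two_mul_integral_inner_integral_Iic hw
    _ ≤ 2 * ∫ s, (g s * ‖∫ r in Iic s, w r ∂μ‖ ^ 2 + Δ s) ∂μ :=
        mul_le_mul_of_nonneg_left
          (integral_mono_ae (integrable_inner_integral_Iic hw) (hgX.add hΔ) h) zero_le_two
    _ = _ := by
        rw [integral_add hgX hΔ]
        simp only [mul_assoc, integral_const_mul]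
        ring

theorem norm_primitive_sq_le_mul_exp [CompleteSpace E] {ν : Measure ℝ}
    [IsLocallyFiniteMeasure ν] {w : ℝ → E} {g Δ : ℝ → ℝ} {a b t : ℝ}
    (hw : IntegrableOn w (Ioc a b) ν) (hg : IntegrableOn g (Ioc a b) ν)
    (hg0 : ∀ s ∈ Ioc a b, 0 ≤ g s) (hatom : ∀ s ∈ Ioc a b, ν.real {s} * g s = 0)
    (hΔ : IntegrableOn Δ (Ioc a b) ν) (hΔ0 : ∀ s ∈ Ioc a b, 0 ≤ Δ s)
    (h : ∀ᵐ s ∂ν.restrict (Ioc a b), ⟪∫ r in Ioc a s, w r ∂ν, w s⟫ ≤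
      g s * ‖∫ r in Ioc a s, w r ∂ν‖ ^ 2 + Δ s)
    (ht : t ∈ Icc a b) :
    ‖∫ r in Ioc a t, w r ∂ν‖ ^ 2 ≤
      (2 * ∫ s in Ioc a b, Δ s ∂ν) * Real.exp (2 * ∫ s in Ioc a b, g s ∂ν) := by
  set x : ℝ → E := fun s => ∫ r in Ioc a s, w r ∂ν
  have hΔ_mono : ∀ s ≤ b, ∫ r in Ioc a s, Δ r ∂ν ≤ ∫ r in Ioc a b, Δ r ∂ν := fun s hs =>
    setIntegral_mono_set hΔ ((ae_restrict_iff' measurableSet_Ioc).2 (.of_forall hΔ0))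
      (Ioc_subset_Ioc_right hs).eventuallyLE
  have hsq : ∀ s ∈ Icc a b,
      ‖x s‖ ^ 2 ≤ 2 * ∫ r in Ioc a b, Δ r ∂ν + ∫ r in Ioc a s, 2 * g r * ‖x r‖ ^ 2 ∂ν := by
    intro s hs
    have hsub : Ioc a s ⊆ Ioc a b := Ioc_subset_Ioc_right hs.2
    have hX := integral_Iic_restrict_Ioc_ae_eq ν w a s
    have hconv : ∫ r in Ioc a s, 2 * g r * ‖∫ q in Iic r, w q ∂ν.restrict (Ioc a s)‖ ^ 2 ∂ν =
        ∫ r in Ioc a s, 2 * g r * ‖x r‖ ^ 2 ∂ν :=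
      integral_congr_ae (hX.mono fun r hr => by dsimp only; rw [hr])
    have := norm_integral_sq_le_of_inner_le (w := w) (hw.mono_set hsub) (hg.mono_set hsub)
      (hΔ.mono_set hsub) (by
        filter_upwards [hX, ae_restrict_of_ae_restrict_of_subset hsub h] with r hr hr'
        rwa [hr])
    linarith [hΔ_mono s hs.2]
  have hsub : Ioc a t ⊆ Ioc a b := Ioc_subset_Ioc_right ht.2
  have hgx : IntegrableOn (fun s => 2 * g s * ‖x s‖ ^ 2) (Ioc a t) ν :=
    (integrable_mul_norm_integral_Iic_sq (hw.mono_set hsub)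
      ((hg.mono_set hsub).const_mul 2)).congr
      ((integral_Iic_restrict_Ioc_ae_eq ν w a t).mono fun r hr => by dsimp only; rw [hr])
  have hΔ_nonneg : 0 ≤ ∫ r in Ioc a b, Δ r ∂ν :=
    setIntegral_nonneg measurableSet_Ioc hΔ0
  calc ‖x t‖ ^ 2 ≤ (2 * ∫ r in Ioc a b, Δ r ∂ν) * Real.exp (∫ s in Ioc a t, 2 * g s ∂ν) :=
        le_mul_exp_integral_of_le_add_integral (φ := fun s => ‖x s‖ ^ 2) ht.1
          ((hg.mono_set hsub).const_mul 2)
          (fun s hs => mul_nonneg zero_le_two (hg0 s (hsub hs)))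
          (fun s hs => by rw [mul_left_comm, hatom s (hsub hs), mul_zero])
          (fun s _ => sq_nonneg _) hgx fun s hs => hsq s ⟨hs.1, hs.2.trans ht.2⟩
    _ ≤ (2 * ∫ r in Ioc a b, Δ r ∂ν) * Real.exp (2 * ∫ s in Ioc a b, g s ∂ν) := by
        rw [integral_const_mul]
        gcongr
        exact (ae_restrict_iff' measurableSet_Ioc).2 (.of_forall hg0)

end InnerProductSpace

theorem bvrc_gronwall_combined_estimate_general
    {H : Type*} [NormedAddCommGroup H] [InnerProductSpace ℝ H]
    [CompleteSpace H]
    (T : ℝ) (ν : Measure ℝ) [IsFiniteMeasure ν]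
    (u v : ℝ → H) (wu wv : ℝ → H)
    (hwu_int : IntegrableOn wu (Icc 0 T) ν)
    (hwv_int : IntegrableOn wv (Icc 0 T) ν)
    (hu_dens : ∀ t ∈ Icc 0 T, u t = u 0 + ∫ s in Ioc 0 t, wu s ∂ν)
    (hv_dens : ∀ t ∈ Icc 0 T, v t = v 0 + ∫ s in Ioc 0 t, wv s ∂ν)
    (h0 : u 0 = v 0)
    (g Δ : ℝ → ℝ)
    (hg0 : ∀ t ∈ Icc 0 T, 0 ≤ g t)
    (hg_int : IntegrableOn g (Icc 0 T) ν)
    (hg_atom : ∀ t ∈ Icc 0 T, (ν {t}).toReal * g t = 0)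
    (hΔ0 : ∀ t ∈ Icc 0 T, 0 ≤ Δ t)
    (hΔ_int : IntegrableOn Δ (Icc 0 T) ν)
    (hae : ∀ᵐ t ∂ν.restrict (Icc 0 T),
      ⟪u t - v t, wu t - wv t⟫ ≤ g t * ‖u t - v t‖ ^ 2 + Δ t) :
    ∀ t ∈ Icc 0 T, ‖u t - v t‖ ^ 2 ≤
      (2 * ∫ s in Ioc 0 T, Δ s ∂ν) * Real.exp (2 * ∫ s in Ioc 0 T, g s ∂ν) := by
  have hsub : Ioc 0 T ⊆ Icc 0 T := Ioc_subset_Icc_self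
  have hx : ∀ s ∈ Icc 0 T, u s - v s = ∫ r in Ioc 0 s, (wu r - wv r) ∂ν := by
    intro s hs
    have hs' : Ioc 0 s ⊆ Icc 0 T := fun r hr => ⟨hr.1.le, hr.2.trans hs.2⟩
    rw [hu_dens s hs, hv_dens s hs, h0, integral_sub (hwu_int.mono_set hs')
      (hwv_int.mono_set hs'), add_sub_add_left_eq_sub]
  intro t ht
  rw [hx t ht]
  refine norm_primitive_sq_le_mul_exp ((hwu_int.sub hwv_int).mono_set hsub)
    (hg_int.mono_set hsub) (fun s hs => hg0 s (hsub hs)) (fun s hs => hg_atom s (hsub hs))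
    (hΔ_int.mono_set hsub) (fun s hs => hΔ0 s (hsub hs)) ?_ ht
  filter_upwards [ae_restrict_of_ae_restrict_of_subset hsub hae,
    ae_restrict_mem measurableSet_Ioc] with s hs hsT
  rwa [← hx s (hsub hsT)]

/-- Let `ν` be a positive Radon measure on `I = [0,T]` and `u, v`
BVRC mappings into a separable real Hilbert space with `u(0) = v(0)` and densities
`du/dν = wu`, `dv/dν = wv`. If there are nonnegative `g, Δ ∈ L¹(I,ℝ;ν)` with
`ν({t}) g(t) = 0` on `I` and `⟪u(t) - v(t), wu(t) - wv(t)⟫ ≤ g(t)‖u(t) - v(t)‖² + Δ(t)`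
ν-a.e. on `I`, then
`sup_{t ∈ I} ‖u(t) - v(t)‖² ≤ (2 ∫_{]0,T]} Δ dν) exp(2 ∫_{]0,T]} g dν)`. -/
theorem bvrc_gronwall_combined_estimate
    {H : Type*} [NormedAddCommGroup H] [InnerProductSpace ℝ H]
    [CompleteSpace H] [TopologicalSpace.SeparableSpace H]
    (T : ℝ) (hT : 0 < T) (ν : Measure ℝ) [IsFiniteMeasure ν]
    (u v : ℝ → H) (wu wv : ℝ → H)
    (hu_bv : BoundedVariationOn u (Icc 0 T))
    (hu_rc : ∀ t ∈ Ico 0 T, ContinuousWithinAt u (Ici t) t)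
    (hv_bv : BoundedVariationOn v (Icc 0 T))
    (hv_rc : ∀ t ∈ Ico 0 T, ContinuousWithinAt v (Ici t) t)
    (hwu_int : IntegrableOn wu (Icc 0 T) ν)
    (hwv_int : IntegrableOn wv (Icc 0 T) ν)
    (hu_dens : ∀ t ∈ Icc 0 T, u t = u 0 + ∫ s in Ioc 0 t, wu s ∂ν)
    (hv_dens : ∀ t ∈ Icc 0 T, v t = v 0 + ∫ s in Ioc 0 t, wv s ∂ν)
    (h0 : u 0 = v 0)
    (g Δ : ℝ → ℝ)
    (hg0 : ∀ t ∈ Icc 0 T, 0 ≤ g t)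
    (hg_int : IntegrableOn g (Icc 0 T) ν)
    (hg_atom : ∀ t ∈ Icc 0 T, (ν {t}).toReal * g t = 0)
    (hΔ0 : ∀ t ∈ Icc 0 T, 0 ≤ Δ t)
    (hΔ_int : IntegrableOn Δ (Icc 0 T) ν)
    (hae : ∀ᵐ t ∂ν.restrict (Icc 0 T),
      ⟪u t - v t, wu t - wv t⟫ ≤ g t * ‖u t - v t‖ ^ 2 + Δ t) :
    ∀ t ∈ Icc 0 T, ‖u t - v t‖ ^ 2 ≤
      (2 * ∫ s in Ioc 0 T, Δ s ∂ν) * Real.exp (2 * ∫ s in Ioc 0 T, g s ∂ν) :=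
  bvrc_gronwall_combined_estimate_general T ν u v wu wv hwu_int hwv_int hu_dens hv_dens h0 g Δ hg0
    hg_int hg_atom hΔ0 hΔ_int hae
end
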